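/- Let V be a complex inner product space and let D, N, G : V → V be linear maps such that: N is skew-adjoint (⟨Nx,y⟩ = -⟨x,Ny⟩ for all x,y) and N∘N = -id; G is self-adjoint (⟨Gx,y⟩ = ⟨x,Gy⟩ for all x,y) and G∘G = id; D∘N = -N∘D; and D∘G = G∘D. Let ε ∈ {1,-1}. If φ ∈ V satisfies N(Gφ) = ε·φ, then ⟨Dφ, φ⟩ = 0. -/
import Mathlib


open scoped ComplexInnerProductSpace

/-- If the boundary Dirac operator `D` anticommutes with the skew-adjoint complex
structure `N` and commutes with the self-adjoint involution `G`, then for any `φ`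
satisfying the chiral boundary condition `N(Gφ) = ε·φ` (with `ε = ±1`) one has
`⟨Dφ, φ⟩ = 0`. -/
theorem stmt_7 {V : Type*} [NormedAddCommGroup V] [InnerProductSpace ℂ V]
    (D N G : V →ₗ[ℂ] V)
    (hNskew : ∀ x y : V, ⟪N x, y⟫ = -⟪x, N y⟫)
    (hNN : N ∘ₗ N = -LinearMap.id)
    (hGsa : ∀ x y : V, ⟪G x, y⟫ = ⟪x, G y⟫)
    (hGG : G ∘ₗ G = LinearMap.id)
    (hDN : D ∘ₗ N = -(N ∘ₗ D))
    (hDG : D ∘ₗ G = G ∘ₗ D)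
    (ε : ℂ) (hε : ε = 1 ∨ ε = -1)
    (φ : V) (hφ : N (G φ) = ε • φ) :
    ⟪D φ, φ⟫ = 0 := by
  have hDN' : ∀ x, D (N x) = -(N (D x)) := fun x => congrFun (congrArg DFunLike.coe hDN) x
  have hDG' : ∀ x, D (G x) = G (D x) := fun x => congrFun (congrArg DFunLike.coe hDG) x
  have hNN' : ∀ x, N (N x) = -x := fun x => congrFun (congrArg DFunLike.coe hNN) x
  have hGG' : ∀ x, G (G x) = x := fun x => congrFun (congrArg DFunLike.coe hGG) x
  have key : ⟪D (N (G φ)), N (G φ)⟫ = ⟪D (ε • φ), ε • φ⟫ := by rw [hφ]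
  have lhs : ⟪D (N (G φ)), N (G φ)⟫ = -⟪D φ, φ⟫ := by
    rw [hDN', hDG', inner_neg_left, hNskew, hNN', inner_neg_right, hGsa, hGG']
    ring
  have rhs : ⟪D (ε • φ), ε • φ⟫ = ⟪D φ, φ⟫ := by
    rw [map_smul, inner_smul_left, inner_smul_right]
    rcases hε with h | h <;> simp [h]
  rw [lhs, rhs] at key
  linear_combination -key / 2
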